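/- arXiv:2501.12472 — 2 statements merged into one kernel-verified Lean document; each statement's English description precedes it below -/
import Mathlib

section
/- Let 0 < ε < 1. Let v₁, …, v_k ∈ ℝⁿ satisfy ‖v_i‖ = 1 for each i, and let w₁, …, w_k ∈ ℝⁿ satisfy ‖w_i − v_i‖ ≤ 2^(−k)·ε for each i. If A is the matrix with columns v₁, …, v_k and B is the matrix with columns w₁, …, w_k, then ‖M(B) − M(A)‖ ≤ ε, where the norm is the Euclidean norm on EuclideanSpace ℝ (Λ(n,k)). -/
open scoped BigOperators Matrix

/-- The index set `Λ(n,k)`. -/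
abbrev Lam (n k : ℕ) : Type := {s : Finset (Fin n) // s.card = k}

/-- The Plücker vector `M(A)` of minors of `A`. -/
noncomputable def pluecker (n k : ℕ) (A : Matrix (Fin n) (Fin k) ℝ) :
    EuclideanSpace ℝ (Lam n k) :=
  WithLp.toLp 2 (fun lam : Lam n k => (A.submatrix (lam.1.orderEmbOfFin lam.2) id).det)

/-- The Plücker model of the oriented Grassmannian `G(n,k)`. -/
def Grass (n k : ℕ) : Set (EuclideanSpace ℝ (Lam n k)) :=
  {x | ∃ A : Matrix (Fin n) (Fin k) ℝ, Aᵀ * A = 1 ∧ pluecker n k A = x}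

/-!
The Plücker map is multilinear in the columns, so with `δ = 2⁻ᵏ ε` the difference
`M(B) - M(A)` is bounded by `k δ (1 + δ)ᵏ⁻¹ ≤ ε` as soon as `‖M(c)‖ ≤ ∏ ‖cⱼ‖` for every
family of columns `c`. For this Hadamard-type bound, replace `c` by its Gram–Schmidt
orthogonalisation `u`: the change of basis is unitriangular, so `M(c) = M(u)`, and by
Cauchy–Binet `‖M(u)‖² = det (uᵀu) = ∏ ‖uⱼ‖²`, while `‖uⱼ‖ ≤ ‖cⱼ‖`.
-/

namespace Matrix

/-- Cauchy–Binet: pair `⋀ᵏ` of the dual with `⋀ᵏ (ι → R)` and expand the second factor in the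
basis of wedges of standard basis vectors. -/
theorem det_transpose_mul_eq_sum_det_submatrix {R ι : Type*} [CommRing R] [Fintype ι]
    [LinearOrder ι] {k : ℕ} (A B : Matrix ι (Fin k) R) :
    (Aᵀ * B).det = ∑ s : {s : Finset ι // s.card = k},
      (A.submatrix (s.1.orderEmbOfFin s.2) id).det *
        (B.submatrix (s.1.orderEmbOfFin s.2) id).det := by
  open exteriorPower in
  let b := Pi.basisFun R ι
  let f : Fin k → Module.Dual R (ι → R) := fun j => LinearMap.proj j ∘ₗ Aᵀ.mulVecLin
  let x := ιMulti R k fun j => Bᵀ j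
  have hdet : (Aᵀ * B).det = pairingDual R _ k (ιMulti R k f) x := by
    rw [pairingDual_ιMulti_ιMulti, ← det_transpose]
    rfl
  rw [hdet, ← (b.exteriorPower k).sum_repr x, map_sum]
  refine Fintype.sum_equiv (Equiv.subtypeEquivRight fun _ => Set.powersetCard.mem_iff) _ _
    fun s => ?_
  rw [map_smul, smul_eq_mul, basis_repr_apply, basis_apply, ιMulti_family, mul_comm,
    ιMultiDual_apply_ιMulti, pairingDual_ιMulti_ιMulti, ← det_transpose (B.submatrix _ _)]
  congr 2
  ext i j
  simp [f, b, Set.powersetCard.ofFinEmbEquiv_symm_apply]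

theorem gram_eq_diagonal_of_pairwise_orthogonal {ι E : Type*} [DecidableEq ι]
    [NormedAddCommGroup E] [InnerProductSpace ℝ E] {v : ι → E}
    (hv : Pairwise fun i j => inner ℝ (v i) (v j) = 0) :
    gram ℝ v = diagonal fun i => ‖v i‖ ^ 2 := by
  ext i j
  rcases eq_or_ne i j with rfl | hij
  · simp [gram_apply]
  · simp [gram_apply, hv hij, hij]

end Matrix

namespace InnerProductSpace

variable {ι : Type*} [LinearOrder ι] [LocallyFiniteOrderBot ι] [WellFoundedLT ι]

theorem inner_gramSchmidt_eq_norm_sq {𝕜 E : Type*} [RCLike 𝕜] [NormedAddCommGroup E]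
    [InnerProductSpace 𝕜 E] (f : ι → E) (j : ι) :
    inner 𝕜 (gramSchmidt 𝕜 f j) (f j) = ‖gramSchmidt 𝕜 f j‖ ^ 2 := by
  conv_lhs => rw [gramSchmidt_def'' 𝕜 f j]
  rw [inner_add_right, inner_self_eq_norm_sq_to_K, inner_sum, Finset.sum_eq_zero, add_zero]
  intro t ht
  rw [inner_smul_right, gramSchmidt_orthogonal 𝕜 f (Finset.mem_Iio.mp ht).ne', mul_zero]

theorem norm_gramSchmidt_le {𝕜 E : Type*} [RCLike 𝕜] [NormedAddCommGroup E]
    [InnerProductSpace 𝕜 E] (f : ι → E) (j : ι) : ‖gramSchmidt 𝕜 f j‖ ≤ ‖f j‖ := by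
  have h := re_inner_le_norm (𝕜 := 𝕜) (gramSchmidt 𝕜 f j) (f j)
  rw [inner_gramSchmidt_eq_norm_sq, ← RCLike.ofReal_pow, RCLike.ofReal_re] at h
  nlinarith [norm_nonneg (gramSchmidt 𝕜 f j), norm_nonneg (f j)]

variable {E : Type*} [NormedAddCommGroup E] [InnerProductSpace ℝ E]

/-- The upper unitriangular matrix expressing `c` in terms of `gramSchmidt ℝ c`, with the
coefficients of `gramSchmidt_def''`. -/
noncomputable def gramSchmidtCoeff (c : ι → E) : Matrix ι ι ℝ :=
  1 + Matrix.of fun t j =>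
    if t < j then inner ℝ (gramSchmidt ℝ c t) (c j) / ‖gramSchmidt ℝ c t‖ ^ 2 else 0

theorem det_gramSchmidtCoeff [Fintype ι] (c : ι → E) : (gramSchmidtCoeff c).det = 1 := by
  rw [Matrix.det_of_isUpperTriangular fun i j (hji : j < i) => ?_]
  · simp [gramSchmidtCoeff]
  · simp [gramSchmidtCoeff, Matrix.one_apply_ne hji.ne', hji.not_gt]

end InnerProductSpace

open Matrix InnerProductSpace

def columnMatrix {m ι : Type*} (c : ι → EuclideanSpace ℝ m) : Matrix m ι ℝ :=
  Matrix.of fun i j => c j i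

theorem transpose_columnMatrix_mul_self {m ι : Type*} [Fintype m] (c : ι → EuclideanSpace ℝ m) :
    (columnMatrix c)ᵀ * columnMatrix c = gram ℝ c := by
  ext a b
  simp [columnMatrix, mul_apply, gram_apply, PiLp.inner_apply, mul_comm]

theorem columnMatrix_eq_mul_gramSchmidtCoeff {m ι : Type*} [Fintype m] [Fintype ι]
    [LinearOrder ι] [LocallyFiniteOrderBot ι] [WellFoundedLT ι] (c : ι → EuclideanSpace ℝ m) :
    columnMatrix c = columnMatrix (gramSchmidt ℝ c) * gramSchmidtCoeff c := by
  ext i j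
  have h := congr_arg (fun x : EuclideanSpace ℝ m => x i) (gramSchmidt_def'' ℝ c j)
  simp only [RCLike.ofReal_real_eq_id, id_eq, WithLp.ofLp_add, WithLp.ofLp_sum,
    WithLp.ofLp_smul, Pi.add_apply, Finset.sum_apply, Pi.smul_apply, smul_eq_mul] at h
  unfold gramSchmidtCoeff
  rw [Matrix.mul_add, Matrix.mul_one, Matrix.add_apply, mul_apply]
  simp only [columnMatrix, of_apply, mul_ite, mul_zero, ← Finset.sum_filter,
    Finset.filter_gt_eq_Iio]
  rw [h]
  simp [mul_comm]

theorem submatrix_columnMatrix_update {m m' ι : Type*} [DecidableEq ι]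
    (c : ι → EuclideanSpace ℝ m) (j : ι) (x : EuclideanSpace ℝ m) (e : m' → m) :
    (columnMatrix (Function.update c j x)).submatrix e id =
      ((columnMatrix c).submatrix e id).updateCol j (x ∘ e) := by
  ext i l
  by_cases h : l = j
  · subst h
    simp [columnMatrix]
  · simp [columnMatrix, h]

section Pluecker

variable {n k : ℕ}

theorem norm_pluecker_sq (A : Matrix (Fin n) (Fin k) ℝ) :
    ‖pluecker n k A‖ ^ 2 = (Aᵀ * A).det := by
  rw [EuclideanSpace.norm_sq_eq, det_transpose_mul_eq_sum_det_submatrix]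
  simp [pluecker, sq]

theorem pluecker_mul (A : Matrix (Fin n) (Fin k) ℝ) (C : Matrix (Fin k) (Fin k) ℝ) :
    pluecker n k (A * C) = C.det • pluecker n k A := by
  ext s
  simp only [pluecker, WithLp.ofLp_smul, WithLp.ofLp_toLp, Pi.smul_apply, smul_eq_mul]
  rw [submatrix_mul _ _ _ id _ Function.bijective_id, submatrix_id_id, det_mul, mul_comm]

theorem pluecker_columnMatrix_gramSchmidt (c : Fin k → EuclideanSpace ℝ (Fin n)) :
    pluecker n k (columnMatrix (gramSchmidt ℝ c)) = pluecker n k (columnMatrix c) := by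
  rw [columnMatrix_eq_mul_gramSchmidtCoeff c, pluecker_mul, det_gramSchmidtCoeff, one_smul]

theorem norm_pluecker_columnMatrix_of_pairwise_orthogonal {c : Fin k → EuclideanSpace ℝ (Fin n)}
    (hc : Pairwise fun i j => inner ℝ (c i) (c j) = 0) :
    ‖pluecker n k (columnMatrix c)‖ = ∏ j, ‖c j‖ := by
  rw [← sq_eq_sq₀ (norm_nonneg _) (by positivity), norm_pluecker_sq, transpose_columnMatrix_mul_self,
    gram_eq_diagonal_of_pairwise_orthogonal hc, det_diagonal, Finset.prod_pow]

theorem norm_pluecker_columnMatrix_le (c : Fin k → EuclideanSpace ℝ (Fin n)) :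
    ‖pluecker n k (columnMatrix c)‖ ≤ ∏ j, ‖c j‖ := by
  rw [← pluecker_columnMatrix_gramSchmidt, norm_pluecker_columnMatrix_of_pairwise_orthogonal
    fun i j hij => gramSchmidt_orthogonal ℝ c hij]
  exact Finset.prod_le_prod (fun _ _ => norm_nonneg _) fun j _ => norm_gramSchmidt_le c j

end Pluecker

noncomputable def plueckerMultilinear (n k : ℕ) :
    MultilinearMap ℝ (fun _ : Fin k => EuclideanSpace ℝ (Fin n)) (EuclideanSpace ℝ (Lam n k)) where
  toFun c := pluecker n k (columnMatrix c)
  map_update_add' c j x y := by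
    ext s
    simp only [pluecker, submatrix_columnMatrix_update, WithLp.ofLp_add, WithLp.ofLp_toLp,
      Pi.add_apply, Pi.add_comp]
    convert det_updateCol_add (n := Fin k) _ _ _ _
  map_update_smul' c j a x := by
    ext s
    simp only [pluecker, submatrix_columnMatrix_update, WithLp.ofLp_smul, WithLp.ofLp_toLp,
      Pi.smul_apply, Pi.smul_comp, smul_eq_mul]
    convert det_updateCol_smul (n := Fin k) _ _ _ _

/-- Bernoulli's inequality for `(1 - δ) ^ m`, combined with `(1 + δ) (1 - δ) ≤ 1`. -/
theorem one_add_pow_le_two {δ : ℝ} {m : ℕ} (h0 : 0 ≤ δ) (h1 : δ ≤ 1) (hm : m * δ ≤ 1 / 2) :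
    (1 + δ) ^ m ≤ 2 := by
  have hbernoulli : 1 - m * δ ≤ (1 - δ) ^ m := by
    simpa [sub_eq_add_neg] using one_add_mul_le_pow (a := -δ) (by linarith) m
  have hprod : (1 + δ) ^ m * (1 - δ) ^ m ≤ 1 := by
    rw [← mul_pow]
    exact pow_le_one₀ (by nlinarith) (by nlinarith)
  nlinarith [pow_nonneg (by linarith : 0 ≤ 1 + δ) m]

theorem Nat.two_mul_le_two_pow (k : ℕ) : 2 * k ≤ 2 ^ k := by
  cases k with
  | zero => simp
  | succ k =>
    have := Nat.lt_two_pow_self (n := k)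
    rw [pow_succ]
    omega

theorem natCast_mul_one_add_pow_mul_le {k : ℕ} {ε : ℝ} (h0 : 0 ≤ ε) (h1 : ε ≤ 1) :
    k * (1 + 2 ^ (-(k : ℤ)) * ε) ^ (k - 1) * (2 ^ (-(k : ℤ)) * ε) ≤ ε := by
  set δ := 2 ^ (-(k : ℤ)) * ε with hδ
  have hδ0 : 0 ≤ δ := by positivity
  have hkδ : k * δ ≤ ε / 2 := by
    have hk : (2 * k : ℝ) ≤ 2 ^ k := by exact_mod_cast Nat.two_mul_le_two_pow k
    rw [hδ, _root_.zpow_neg, zpow_natCast, ← mul_assoc, ← div_eq_mul_inv, div_mul_eq_mul_div,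
      div_le_div_iff₀ (by positivity) two_pos]
    nlinarith
  have hδ1 : δ ≤ 1 := mul_le_one₀ (zpow_le_one_of_nonpos₀ one_le_two (by simp)) h0 h1
  have hpow : (1 + δ) ^ (k - 1) ≤ 2 := by
    refine one_add_pow_le_two hδ0 hδ1 ?_
    have : ((k - 1 : ℕ) : ℝ) ≤ k := by exact_mod_cast Nat.sub_le k 1
    nlinarith
  calc k * (1 + δ) ^ (k - 1) * δ ≤ k * 2 * δ := by gcongr
    _ ≤ ε := by linarith

theorem pluecker_close_of_columns_close_general (n k : ℕ)
    (ε : ℝ) (hε0 : 0 < ε) (hε1 : ε < 1)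
    (v w : Fin k → EuclideanSpace ℝ (Fin n))
    (hv : ∀ i, ‖v i‖ = 1)
    (hw : ∀ i, ‖w i - v i‖ ≤ (2 : ℝ) ^ (-(k : ℤ)) * ε)
    (A B : Matrix (Fin n) (Fin k) ℝ)
    (hA : ∀ i j, A i j = v j i) (hB : ∀ i j, B i j = w j i) :
    ‖pluecker n k B - pluecker n k A‖ ≤ ε := by
  obtain rfl : A = columnMatrix v := Matrix.ext hA
  obtain rfl : B = columnMatrix w := Matrix.ext hB
  set δ := (2 : ℝ) ^ (-(k : ℤ)) * ε
  have hδ : 0 ≤ δ := by positivity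
  have hv' : ‖v‖ ≤ 1 + δ := (pi_norm_le_iff_of_nonneg (by positivity)).2 fun i => by
    rw [hv i]
    linarith
  have hw' : ‖w‖ ≤ 1 + δ := (pi_norm_le_iff_of_nonneg (by positivity)).2 fun i =>
    (norm_le_norm_add_norm_sub' (w i) (v i)).trans (by rw [hv i]; linarith [hw i])
  have hwv : ‖w - v‖ ≤ δ := (pi_norm_le_iff_of_nonneg hδ).2 hw
  calc ‖plueckerMultilinear n k w - plueckerMultilinear n k v‖
      ≤ 1 * Fintype.card (Fin k) * max ‖w‖ ‖v‖ ^ (Fintype.card (Fin k) - 1) * ‖w - v‖ :=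
        (plueckerMultilinear n k).norm_image_sub_le_of_bound zero_le_one
          (fun c => (one_mul (∏ i, ‖c i‖)).symm ▸ norm_pluecker_columnMatrix_le c) w v
    _ ≤ k * (1 + δ) ^ (k - 1) * δ := by
        rw [Fintype.card_fin, one_mul]
        gcongr
        exact max_le hw' hv'
    _ ≤ ε := natCast_mul_one_add_pow_mul_le hε0.le hε1.le

/-- quantitative continuity of the Plücker map near a matrix with
unit columns. -/
theorem pluecker_close_of_columns_close (n k : ℕ) (hk : 1 ≤ k) (hkn : k ≤ n)
    (ε : ℝ) (hε0 : 0 < ε) (hε1 : ε < 1)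
    (v w : Fin k → EuclideanSpace ℝ (Fin n))
    (hv : ∀ i, ‖v i‖ = 1)
    (hw : ∀ i, ‖w i - v i‖ ≤ (2 : ℝ) ^ (-(k : ℤ)) * ε)
    (A B : Matrix (Fin n) (Fin k) ℝ)
    (hA : ∀ i j, A i j = v j i) (hB : ∀ i j, B i j = w j i) :
    ‖pluecker n k B - pluecker n k A‖ ≤ ε :=
  pluecker_close_of_columns_close_general n k ε hε0 hε1 v w hv hw A B hA hB
end

section
/- Let N ≥ 2, let E = EuclideanSpace ℝ (Fin N), let e ∈ E with ‖e‖ = 1, let r > 1 and p > (1+r)²/r be real numbers. Define f : E → ℝ by f(0) = 0 and f(x) = ‖x‖ * ‖(‖x‖⁻¹ • x) − r • e‖^p for x ≠ 0 (the positively homogeneous degree-1 extension of the function x ↦ ‖x − r • e‖^p from the unit sphere). Then f is not convex on E. -/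
/-!
Let `v` be a unit vector orthogonal to `e` and, for `0 < u < 1`, let
`a± = u⁻¹ • (-u • e ± √(1 - u²) • v)`: both have norm `u⁻¹` and their midpoint is `-e`.
By homogeneity `f a± = u⁻¹ (1 + r² + 2ru)^(p/2)`, while `f (-e) = (1 + r² + 2r)^(p/2)` is the value
of the same expression at `u = 1`. Its derivative at `u = 1` is `(1 + r)^(p - 2) (pr - (1 + r)²) > 0`,
so for `u` slightly below `1` the value of `f` at the midpoint of `a+` and `a-` exceeds the
values at both ends.
-/

open Real Filter Topology
open scoped InnerProductSpace

theorem HasDerivAt.eventually_nhdsLT_lt {f : ℝ → ℝ} {f' x : ℝ} (hf : HasDerivAt f f' x)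
    (hf' : 0 < f') : ∀ᶠ y in 𝓝[<] x, f y < f x := by
  have hslope : Tendsto (slope f x) (𝓝[<] x) (𝓝 f') :=
    (hasDerivAt_iff_tendsto_slope.mp hf).mono_left (nhdsWithin_mono _ fun _ hy => ne_of_lt hy)
  filter_upwards [hslope.eventually (lt_mem_nhds hf'), self_mem_nhdsWithin] with y hpos hy
  rw [slope_def_field] at hpos
  rcases div_pos_iff.mp hpos with h | h <;> linarith [h.1, h.2, show y < x from hy]

theorem hasDerivAt_inv_mul_rpow_one {a b q : ℝ} (hab : 0 < a + b) :
    HasDerivAt (fun u => u⁻¹ * (a + b * u) ^ q) ((a + b) ^ (q - 1) * (q * b - (a + b))) 1 := by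
  have := (hasDerivAt_inv one_ne_zero).mul
    ((((hasDerivAt_id (1 : ℝ)).const_mul b).const_add a).rpow_const (p := q)
      (Or.inl (by simpa using hab.ne')))
  refine this.congr_deriv ?_
  simp only [id, mul_one, one_pow, inv_one, one_mul]
  rw [rpow_sub_one hab.ne']
  field_simp
  ring

theorem exists_mem_Ioo_inv_mul_rpow_lt {r p : ℝ} (hr : 0 < r) (hp : (1 + r) ^ 2 / r < p) :
    ∃ u ∈ Set.Ioo (0 : ℝ) 1,
      u⁻¹ * (1 + r ^ 2 + 2 * r * u) ^ (p / 2) < (1 + r ^ 2 + 2 * r) ^ (p / 2) := by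
  have hderiv := hasDerivAt_inv_mul_rpow_one (a := 1 + r ^ 2) (b := 2 * r) (q := p / 2)
    (by positivity)
  have hslope : 0 < p / 2 * (2 * r) - (1 + r ^ 2 + 2 * r) := by
    have := (div_lt_iff₀ hr).mp hp
    linarith
  obtain ⟨u, hlt, hu⟩ := ((hderiv.eventually_nhdsLT_lt
    (mul_pos (rpow_pos_of_pos (by positivity) _) hslope)).and (Ioo_mem_nhdsLT zero_lt_one)).exists
  exact ⟨u, hu, by simpa using hlt⟩

section InnerProductSpace

variable {E : Type*} [NormedAddCommGroup E] [InnerProductSpace ℝ E]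

theorem exists_norm_eq_one_inner_eq_zero [FiniteDimensional ℝ E] (hE : 2 ≤ Module.finrank ℝ E)
    (e : E) : ∃ v : E, ‖v‖ = 1 ∧ ⟪e, v⟫_ℝ = 0 := by
  have hK : 0 < Module.finrank ℝ (ℝ ∙ e)ᗮ := by
    have := (ℝ ∙ e).finrank_add_finrank_orthogonal
    have := finrank_span_le_card (R := ℝ) ({e} : Set E)
    simp only [Set.toFinset_singleton, Finset.card_singleton] at this
    omega
  have := Module.finrank_pos_iff.mp hK
  obtain ⟨v, hv⟩ := exists_norm_eq (ℝ ∙ e)ᗮ zero_le_one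
  exact ⟨v, by simpa using hv, Submodule.mem_orthogonal_singleton_iff_inner_right.mp v.2⟩

theorem norm_smul_add_smul_eq_one {e v : E} (he : ‖e‖ = 1) (hv : ‖v‖ = 1) (hev : ⟪e, v⟫_ℝ = 0)
    {a b : ℝ} (hab : a ^ 2 + b ^ 2 = 1) : ‖a • e + b • v‖ = 1 := by
  have hsq : ‖a • e + b • v‖ ^ 2 = 1 ^ 2 := by
    rw [norm_add_sq_real, real_inner_smul_left, real_inner_smul_right, hev, norm_smul, norm_smul,
      he, hv, Real.norm_eq_abs, Real.norm_eq_abs, mul_one, mul_one, sq_abs, sq_abs]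
    linear_combination hab
  exact (sq_eq_sq₀ (norm_nonneg _) zero_le_one).mp hsq

theorem norm_sub_smul_rpow_of_norm_eq_one {w e : E} (hw : ‖w‖ = 1) (he : ‖e‖ = 1) (r p : ℝ) :
    ‖w - r • e‖ ^ p = (1 + r ^ 2 - 2 * r * ⟪w, e⟫_ℝ) ^ (p / 2) := by
  have hsq : ‖w - r • e‖ ^ 2 = 1 + r ^ 2 - 2 * r * ⟪w, e⟫_ℝ := by
    rw [norm_sub_sq_real, norm_smul, hw, he, real_inner_smul_right, Real.norm_eq_abs,
      mul_one, sq_abs]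
    ring
  rw [← hsq, rpow_div_two_eq_sqrt _ (sq_nonneg _), sqrt_sq (norm_nonneg _)]

theorem apply_smul_of_norm_eq_one {f g : E → ℝ} (hf : ∀ x, x ≠ 0 → f x = ‖x‖ * g (‖x‖⁻¹ • x))
    {c : ℝ} (hc : 0 < c) {w : E} (hw : ‖w‖ = 1) : f (c • w) = c * g w := by
  have hcw : c • w ≠ 0 := smul_ne_zero hc.ne' (norm_ne_zero_iff.mp (by simp [hw]))
  rw [hf _ hcw, norm_smul, hw, mul_one, Real.norm_of_nonneg hc.le, smul_smul,
    inv_mul_cancel₀ hc.ne', one_smul]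

end InnerProductSpace

theorem homogeneous_extension_not_convex_general (N : ℕ) (hN : 2 ≤ N)
    (e : EuclideanSpace ℝ (Fin N)) (he : ‖e‖ = 1)
    (r p : ℝ) (hr : 1 < r) (hp : (1 + r) ^ 2 / r < p)
    (f : EuclideanSpace ℝ (Fin N) → ℝ)
    (hf : ∀ x : EuclideanSpace ℝ (Fin N), x ≠ 0 →
      f x = ‖x‖ * ‖(‖x‖⁻¹ • x) - r • e‖ ^ p) :
    ¬ ConvexOn ℝ Set.univ f := by
  intro hconv
  have hhom {c : ℝ} (hc : 0 < c) {w} (hw : ‖w‖ = 1) : f (c • w) = c * ‖w - r • e‖ ^ p :=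
    apply_smul_of_norm_eq_one (g := fun y => ‖y - r • e‖ ^ p) hf hc hw
  obtain ⟨v, hv, hev⟩ := exists_norm_eq_one_inner_eq_zero (by simpa using hN) e
  obtain ⟨u, ⟨hu0, hu1⟩, hlt⟩ := exists_mem_Ioo_inv_mul_rpow_lt (by linarith) hp
  set t := √(1 - u ^ 2)
  have hw : ∀ s, s ^ 2 = t ^ 2 → ‖(-u) • e + s • v‖ = 1 := fun s hs =>
    norm_smul_add_smul_eq_one he hv hev (by rw [hs, sq_sqrt (by nlinarith)]; ring)
  have hfw : ∀ s, s ^ 2 = t ^ 2 →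
      f (u⁻¹ • ((-u) • e + s • v)) = u⁻¹ * (1 + r ^ 2 + 2 * r * u) ^ (p / 2) := by
    intro s hs
    rw [hhom (inv_pos.mpr hu0) (hw s hs), norm_sub_smul_rpow_of_norm_eq_one (hw s hs) he,
      inner_add_left, real_inner_smul_left, real_inner_smul_left, real_inner_self_eq_norm_sq,
      real_inner_comm, hev, he]
    ring_nf
  have hfe : f (-e) = (1 + r ^ 2 + 2 * r) ^ (p / 2) := by
    have hne : ‖-e‖ = 1 := by rw [norm_neg, he]
    rw [← one_smul ℝ (-e), hhom one_pos hne, one_mul, norm_sub_smul_rpow_of_norm_eq_one hne he,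
      inner_neg_left, real_inner_self_eq_norm_sq, he]
    ring_nf
  have hmid : (1 / 2 : ℝ) • (u⁻¹ • ((-u) • e + t • v)) + (1 / 2 : ℝ) • (u⁻¹ • ((-u) • e + (-t) • v))
      = -e := by
    match_scalars <;> field_simp <;> ring
  have hmid_le := hconv.2 (Set.mem_univ (u⁻¹ • ((-u) • e + t • v)))
    (Set.mem_univ (u⁻¹ • ((-u) • e + (-t) • v))) (by norm_num : (0 : ℝ) ≤ 1 / 2)
    (by norm_num : (0 : ℝ) ≤ 1 / 2) (by norm_num)
  rw [hmid, hfe, hfw t rfl, hfw (-t) (neg_sq t), smul_eq_mul] at hmid_le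
  linarith

/-- the positively homogeneous degree-1 extension of the restriction
to the unit sphere of the convex function x ↦ ‖x − r • e‖^p need not be convex. -/
theorem homogeneous_extension_not_convex (N : ℕ) (hN : 2 ≤ N)
    (e : EuclideanSpace ℝ (Fin N)) (he : ‖e‖ = 1)
    (r p : ℝ) (hr : 1 < r) (hp : (1 + r) ^ 2 / r < p)
    (f : EuclideanSpace ℝ (Fin N) → ℝ)
    (hf0 : f 0 = 0)
    (hf : ∀ x : EuclideanSpace ℝ (Fin N), x ≠ 0 →
      f x = ‖x‖ * ‖(‖x‖⁻¹ • x) - r • e‖ ^ p) :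
    ¬ ConvexOn ℝ Set.univ f :=
  homogeneous_extension_not_convex_general N hN e he r p hr hp f hf
end
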